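/- Quantitative breakdown-point theorem for DRL: Let H be a real Hilbert space, θ* ∈ H, r ≥ 0, λ* ∈ (0, 1], and δ ∈ (0, 1/2). Suppose the k machines have outlier fractions λ_1, …, λ_k ∈ [0, 1] with average (1/k)·Σ_{i=1}^k λ_i ≤ (1/2 − δ)·λ*, and that every machine i whose outlier fraction satisfies λ_i ≤ λ* outputs an estimate θ̂_i ∈ H with ‖θ̂_i − θ*‖ ≤ r (machines with λ_i > λ* output arbitrary points of H). Then strictly more than (1/2 + δ)·k machines satisfy λ_i ≤ λ*, and every geometric median θ̃ of θ̂_1, …, θ̂_k satisfies ‖θ̃ − θ*‖ ≤ C_{1/2 − δ} · r, where C_{1/2 − δ} = (1/2 + δ)/√(2δ). -/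

import Mathlib

open scoped BigOperators

/-- A point `m` is a geometric median of the points `θ 1, …, θ k` if it minimizes
`y ↦ ∑ j, ‖y - θ j‖`. -/
def IsGeomMedian {H : Type*} [NormedAddCommGroup H] {k : ℕ} (θ : Fin k → H) (m : H) : Prop :=
  ∀ y : H, ∑ j, ‖m - θ j‖ ≤ ∑ j, ‖y - θ j‖

/-!
By Markov's inequality fewer than `(1/2 - δ) k` machines have `λ i > λ*`, so the set `J` of
machines whose estimates lie in the ball `B(θ*, r)` has more than `(1/2 + δ) k` elements.
Let `m` be a geometric median with `d = ‖m - θ*‖ > r`. Seen from `m`, every point of `B(θ*, r)`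
makes an angle of cosine at least `s / d` with the direction of `θ*`, where `s = √(d² - r²)`;
moving `m` by `t (θ* - m)` therefore shortens each distance to a point of `J` by `t s + O(t²)`
and lengthens every other one by at most `t d`. Minimality of `m` forces `#J s ≤ #Jᶜ d`, hence
`(1/2 + δ) s ≤ (1/2 - δ) d`, which after squaring is `2δ d² ≤ (1/2 + δ)² r²`.
-/

open Finset Filter Topology

theorem Finset.card_filter_lt_lt_of_sum_le {ι : Type*} (s : Finset ι) {f : ι → ℝ}
    (hf : ∀ i ∈ s, 0 ≤ f i) {c b : ℝ} (hc : 0 < c) (hb : 0 < b)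
    (hsum : ∑ i ∈ s, f i ≤ c * b) : (#{i ∈ s | c < f i} : ℝ) < b := by
  rcases {i ∈ s | c < f i}.eq_empty_or_nonempty with hempty | hne
  · simpa [hempty] using hb
  · have hlt : #{i ∈ s | c < f i} * c < c * b :=
      calc (#{i ∈ s | c < f i} : ℝ) * c = ∑ _ ∈ {i ∈ s | c < f i}, c := by simp
        _ < ∑ i ∈ {i ∈ s | c < f i}, f i :=
          sum_lt_sum_of_nonempty hne fun i hi => (mem_filter.1 hi).2
        _ ≤ ∑ i ∈ s, f i :=
          sum_le_sum_of_subset_of_nonneg (filter_subset _ s) fun i hi _ => hf i hi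
        _ ≤ c * b := hsum
    nlinarith

theorem le_div_sqrt_mul_of_mul_sq_le {a b d r : ℝ} (ha : 0 < a) (hbr : 0 ≤ b * r)
    (h : a * d ^ 2 ≤ (b * r) ^ 2) : d ≤ b / √a * r := by
  rw [div_mul_eq_mul_div, le_div_iff₀ (Real.sqrt_pos.2 ha)]
  refine (abs_le_of_sq_le_sq' ?_ hbr).2
  rw [mul_pow, Real.sq_sqrt ha.le]
  linarith

theorem le_of_forall_pos_le_add_mul {a b c : ℝ} (h : ∀ t > 0, a ≤ b + c * t) : a ≤ b := by
  have hlim : Tendsto (fun t => b + c * t) (𝓝[>] 0) (𝓝 (b + c * 0)) :=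
    ((continuous_const.add (continuous_const.mul continuous_id)).tendsto 0).mono_left
      nhdsWithin_le_nhds
  simpa using ge_of_tendsto hlim (eventually_nhdsWithin_of_forall h)

section InnerProductSpace

variable {H : Type*} [NormedAddCommGroup H] [InnerProductSpace ℝ H]

theorem norm_mul_norm_add_smul_le (a v : H) (t : ℝ) :
    ‖a‖ * ‖a + t • v‖ ≤ ‖a‖ ^ 2 + t * inner ℝ a v + t ^ 2 * ‖v‖ ^ 2 / 2 := by
  have hamgm := two_mul_le_add_sq ‖a‖ ‖a + t • v‖
  rw [norm_add_sq_real, real_inner_smul_right, norm_smul, Real.norm_eq_abs, mul_pow, sq_abs]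
    at hamgm
  linarith

theorem inner_le_neg_norm_mul_sqrt {a v : H} {r : ℝ} (h : ‖a + v‖ ≤ r) (hr : r ≤ ‖v‖) :
    inner ℝ a v ≤ -(‖a‖ * √(‖v‖ ^ 2 - r ^ 2)) := by
  have hs := Real.sq_sqrt (sub_nonneg.2 (pow_le_pow_left₀ ((norm_nonneg _).trans h) hr 2))
  have hsq : ‖a + v‖ ^ 2 ≤ r ^ 2 := pow_le_pow_left₀ (norm_nonneg _) h 2
  rw [norm_add_sq_real] at hsq
  nlinarith [two_mul_le_add_sq ‖a‖ √(‖v‖ ^ 2 - r ^ 2)]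

theorem norm_add_smul_le_of_inner_le {a v : H} {s t ρ : ℝ} (hρ : 0 < ρ) (ha : ρ ≤ ‖a‖)
    (hinner : inner ℝ a v ≤ -(‖a‖ * s)) (ht : 0 ≤ t) :
    ‖a + t • v‖ ≤ ‖a‖ - t * s + t ^ 2 * ‖v‖ ^ 2 / (2 * ρ) := by
  have ha0 : 0 < ‖a‖ := hρ.trans_le ha
  have hquad : t ^ 2 * ‖v‖ ^ 2 / 2 ≤ ‖a‖ * (t ^ 2 * ‖v‖ ^ 2 / (2 * ρ)) := by
    rw [mul_div_assoc', le_div_iff₀ (by positivity)]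
    nlinarith [mul_nonneg (sq_nonneg t) (sq_nonneg ‖v‖)]
  refine le_of_mul_le_mul_left ?_ ha0
  nlinarith [norm_mul_norm_add_smul_le a v t, mul_le_mul_of_nonneg_left hinner ht]

variable {k : ℕ} {θ : Fin k → H} {m z : H} {r : ℝ}

theorem IsGeomMedian.card_mul_sqrt_le (hm : IsGeomMedian θ m) (J : Finset (Fin k))
    (hJ : ∀ j ∈ J, ‖θ j - z‖ ≤ r) (hr : r < ‖m - z‖) :
    #J * √(‖m - z‖ ^ 2 - r ^ 2) ≤ #Jᶜ * ‖m - z‖ := by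
  set d := ‖m - z‖
  set s := √(d ^ 2 - r ^ 2)
  set K := d ^ 2 / (2 * (d - r))
  have hv : ‖z - m‖ = d := norm_sub_rev z m
  have hshift (t : ℝ) (j : Fin k) : m + t • (z - m) - θ j = (m - θ j) + t • (z - m) := by abel
  have hgood (t : ℝ) (ht : 0 ≤ t) (j : Fin k) (hj : j ∈ J) :
      ‖m + t • (z - m) - θ j‖ ≤ ‖m - θ j‖ - t * s + t ^ 2 * K := by
    have hdist : d - r ≤ ‖m - θ j‖ := by
      linarith [norm_sub_le_norm_sub_add_norm_sub m (θ j) z, hJ j hj]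
    have hinner : inner ℝ (m - θ j) (z - m) ≤ -(‖m - θ j‖ * s) := by
      have := inner_le_neg_norm_mul_sqrt (a := m - θ j) (v := z - m) (r := r)
        (by rw [sub_add_sub_cancel', norm_sub_rev]; exact hJ j hj) (by rw [hv]; exact hr.le)
      rwa [hv] at this
    have := norm_add_smul_le_of_inner_le (sub_pos.2 hr) hdist hinner ht
    rw [hshift, hv] at *
    linarith [show t ^ 2 * d ^ 2 / (2 * (d - r)) = t ^ 2 * K by ring]
  have hbad (t : ℝ) (ht : 0 ≤ t) (j : Fin k) :
      ‖m + t • (z - m) - θ j‖ ≤ ‖m - θ j‖ + t * d := by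
    rw [hshift]
    calc _ ≤ ‖m - θ j‖ + ‖t • (z - m)‖ := norm_add_le _ _
      _ = ‖m - θ j‖ + t * d := by rw [norm_smul, Real.norm_of_nonneg ht, hv]
  refine le_of_forall_pos_le_add_mul (c := #J * K) fun t ht =>
    le_of_mul_le_mul_left ?_ ht
  have hmin := hm (m + t • (z - m))
  rw [← sum_add_sum_compl J, ← sum_add_sum_compl J] at hmin
  have hJsum := sum_le_sum (hgood t ht.le)
  have hJcsum := sum_le_sum fun j (_ : j ∈ Jᶜ) => hbad t ht.le j
  simp only [sum_add_distrib, sum_sub_distrib, sum_const, nsmul_eq_mul] at hJsum hJcsum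
  nlinarith

theorem IsGeomMedian.norm_sub_le_of_lt_card (hm : IsGeomMedian θ m) {δ : ℝ} (hδ : 0 < δ)
    (J : Finset (Fin k)) (hJ : ∀ j ∈ J, ‖θ j - z‖ ≤ r) (hJcard : (1 / 2 + δ) * k < #J) :
    ‖m - z‖ ≤ (1 / 2 + δ) / √(2 * δ) * r := by
  have hJpos : (0 : ℝ) < #J := (by positivity : (0 : ℝ) ≤ (1 / 2 + δ) * k).trans_lt hJcard
  obtain ⟨j, hj⟩ : J.Nonempty := card_pos.1 (by exact_mod_cast hJpos)
  have hr : 0 ≤ r := (norm_nonneg _).trans (hJ j hj)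
  have hJk : (#J : ℝ) + #Jᶜ = k := by
    exact_mod_cast (card_add_card_compl J).trans (Fintype.card_fin k)
  have hk : (0 : ℝ) < k := by linarith [(#Jᶜ).cast_nonneg (α := ℝ)]
  apply le_div_sqrt_mul_of_mul_sq_le (by positivity) (by positivity)
  set d := ‖m - z‖
  rcases le_or_gt d r with hdr | hdr
  · have hd2 : d ^ 2 ≤ r ^ 2 := pow_le_pow_left₀ (norm_nonneg _) hdr 2
    nlinarith [mul_le_mul_of_nonneg_left hd2 hδ.le,
      mul_nonneg (sq_nonneg (1 / 2 - δ)) (sq_nonneg r)]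
  set s := √(d ^ 2 - r ^ 2)
  have hs : s ^ 2 = d ^ 2 - r ^ 2 := Real.sq_sqrt (by nlinarith)
  have hhalf : (1 / 2 + δ) * s ≤ (1 / 2 - δ) * d := by
    refine le_of_mul_le_mul_left ?_ hk
    nlinarith [hm.card_mul_sqrt_le J hJ hdr, norm_nonneg (m - z),
      mul_le_mul_of_nonneg_right hJcard.le (Real.sqrt_nonneg (d ^ 2 - r ^ 2))]
  have hsq : (1 / 2 + δ) ^ 2 * s ^ 2 ≤ (1 / 2 - δ) ^ 2 * d ^ 2 := by
    nlinarith [mul_self_le_mul_self (by positivity) hhalf]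
  rw [hs] at hsq
  linarith

end InnerProductSpace

theorem drl_breakdown_point_general {H : Type*} [NormedAddCommGroup H] [InnerProductSpace ℝ H]
    {k : ℕ} (hk : 0 < k)
    (θstar : H) (r : ℝ)
    (lamStar : ℝ) (hlamStar : lamStar ∈ Set.Ioc (0 : ℝ) 1)
    (δ : ℝ) (hδ : δ ∈ Set.Ioo (0 : ℝ) (1 / 2))
    (lam : Fin k → ℝ) (hlam : ∀ i, lam i ∈ Set.Icc (0 : ℝ) 1)
    (havg : (1 / k : ℝ) * ∑ i, lam i ≤ (1 / 2 - δ) * lamStar)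
    (θhat : Fin k → H)
    (hgood : ∀ i, lam i ≤ lamStar → ‖θhat i - θstar‖ ≤ r) :
    (1 / 2 + δ) * k < ((Finset.univ.filter fun i => lam i ≤ lamStar).card : ℝ) ∧
      ∀ θtilde : H, IsGeomMedian θhat θtilde →
        ‖θtilde - θstar‖ ≤ (1 / 2 + δ) / Real.sqrt (2 * δ) * r := by
  have hk' : (0 : ℝ) < k := by exact_mod_cast hk
  have hsum : ∑ i, lam i ≤ lamStar * ((1 / 2 - δ) * k) := by
    rw [one_div_mul_eq_div, div_le_iff₀ hk'] at havg
    linarith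
  have hbad := card_filter_lt_lt_of_sum_le univ (fun i _ => (hlam i).1) hlamStar.1
    (mul_pos (by linarith [hδ.2]) hk') hsum
  have hsplit : (#{i | lam i ≤ lamStar} : ℝ) + #{i | lamStar < lam i} = k := by
    have := card_filter_add_card_filter_not (s := univ) fun i => lam i ≤ lamStar
    simp only [not_le, card_univ, Fintype.card_fin] at this
    exact_mod_cast this
  have hcount : (1 / 2 + δ) * k < #{i | lam i ≤ lamStar} := by linarith
  exact ⟨hcount, fun θtilde hmed =>
    hmed.norm_sub_le_of_lt_card hδ.1 _ (fun i hi => hgood i (mem_filter.1 hi).2) hcount⟩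

/-- **Quantitative breakdown-point theorem for DRL.** If the per-machine outlier fractions
`λ i ∈ [0,1]` have average at most `(1/2 - δ) λ*`, and every machine with outlier fraction at
most `λ*` (the breakdown point of the base algorithm) outputs an estimate within distance `r`
of `θ*` (other machines being arbitrary), then strictly more than `(1/2 + δ) k` machines have
`λ i ≤ λ*`, and every geometric median of the estimates lies within distance
`C_{1/2 - δ} · r = ((1/2 + δ)/√(2δ)) · r` of `θ*`. -/
theorem drl_breakdown_point {H : Type*} [NormedAddCommGroup H] [InnerProductSpace ℝ H]
    [CompleteSpace H] {k : ℕ} (hk : 0 < k)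
    (θstar : H) (r : ℝ) (hr : 0 ≤ r)
    (lamStar : ℝ) (hlamStar : lamStar ∈ Set.Ioc (0 : ℝ) 1)
    (δ : ℝ) (hδ : δ ∈ Set.Ioo (0 : ℝ) (1 / 2))
    (lam : Fin k → ℝ) (hlam : ∀ i, lam i ∈ Set.Icc (0 : ℝ) 1)
    (havg : (1 / k : ℝ) * ∑ i, lam i ≤ (1 / 2 - δ) * lamStar)
    (θhat : Fin k → H)
    (hgood : ∀ i, lam i ≤ lamStar → ‖θhat i - θstar‖ ≤ r) :
    (1 / 2 + δ) * k < ((Finset.univ.filter fun i => lam i ≤ lamStar).card : ℝ) ∧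
      ∀ θtilde : H, IsGeomMedian θhat θtilde →
        ‖θtilde - θstar‖ ≤ (1 / 2 + δ) / Real.sqrt (2 * δ) * r :=
  drl_breakdown_point_general hk θstar r lamStar hlamStar δ hδ lam hlam havg θhat hgood
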